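/- arXiv:1804.00747 — 3 statements merged into one kernel-verified Lean document; each statement's English description precedes it below -/
import Mathlib

section
/- Each step of the thresholding scheme is a minimizing movement: for any h > 0 and any measurable unit vector field u^{n-1} : 𝕋³ → 𝕊¹, the function u^n := (G_h∗u^{n-1})/|G_h∗u^{n-1}| minimizes the functional F(u) := E_h(u) + (1/h) ∫_{𝕋³} (u − u^{n-1}) · G_h∗(u − u^{n-1}) dx among all measurable u : 𝕋³ → ℝ² with |u| ≤ 1 a.e.; moreover any minimizer coincides a.e. with u^n on the set {x : (G_h∗u^{n-1})(x) ≠ 0}. -/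
open MeasureTheory Real Filter
open scoped RealInnerProductSpace Topology NNReal

noncomputable section

abbrev Euc (d : ℕ) := EuclideanSpace ℝ (Fin d)

/-- The Gaussian heat kernel on ℝ^d at time `h`. -/
def heatKer (d : ℕ) (h : ℝ) (z : Euc d) : ℝ :=
  (4 * π * h) ^ (-(d : ℝ) / 2) * Real.exp (-‖z‖ ^ 2 / (4 * h))

/-- Convolution of the heat kernel with a function. -/
def heatConv {d : ℕ} {F : Type*} [NormedAddCommGroup F] [NormedSpace ℝ F]
    (h : ℝ) (u : Euc d → F) (x : Euc d) : F :=
  ∫ z : Euc d, heatKer d h z • u (x - z)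

/-- Convolution of `∂ᵢ G_h` with a function. -/
def heatConvD {d : ℕ} {F : Type*} [NormedAddCommGroup F] [NormedSpace ℝ F]
    (h : ℝ) (i : Fin d) (u : Euc d → F) (x : Euc d) : F :=
  ∫ z : Euc d, (fderiv ℝ (heatKer d h) z (EuclideanSpace.single i 1)) • u (x - z)

/-- Fundamental domain of the torus ℝ^d/ℤ^d. -/
def cube (d : ℕ) : Set (Euc d) := {x | ∀ i, 0 ≤ x i ∧ x i < 1}

/-- An integer vector, regarded as an element of ℝ^d. -/
def intVec {d : ℕ} (k : Fin d → ℤ) : Euc d := WithLp.toLp 2 (fun i => (k i : ℝ))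

/-- ℤ^d-periodicity. -/
def ZPeriodic {d : ℕ} {α : Type*} (u : Euc d → α) : Prop :=
  ∀ (x : Euc d) (k : Fin d → ℤ), u (x + intVec k) = u x

/-- The localized thresholding energy. -/
def EhLoc (h : ℝ) (u : Euc 3 → Euc 2) (ψ : Euc 3 → ℝ) : ℝ :=
  (1 / h) * ∫ x in cube 3, ψ x * (1 - ⟪u x, heatConv h u x⟫)

/-- The thresholding energy. -/
def Eh (h : ℝ) (u : Euc 3 → Euc 2) : ℝ :=
  (1 / h) * ∫ x in cube 3, (1 - ⟪u x, heatConv h u x⟫)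

/-- Squared Frobenius norm of a linear map between Euclidean spaces. -/
def frobSq {d m : ℕ} (L : Euc d →L[ℝ] Euc m) : ℝ :=
  ∑ i : Fin d, ∑ j : Fin m, (L (EuclideanSpace.single i 1) j) ^ 2

/-- One step of the thresholding scheme: diffusion followed by projection onto 𝕊¹. -/
def threshStep (h : ℝ) (u : Euc 3 → Euc 2) : Euc 3 → Euc 2 :=
  fun x => ‖heatConv h u x‖⁻¹ • heatConv h u x

/-- `Du` is the weak Jacobian of `u` on the torus. -/
def IsWeakJacobian {d m : ℕ} (u : Euc d → Euc m) (Du : Euc d → Euc d →L[ℝ] Euc m) : Prop :=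
  ∀ φ : Euc d → ℝ, ContDiff ℝ (⊤ : ℕ∞) φ → ZPeriodic φ →
    ∀ (i : Fin d) (j : Fin m),
      ∫ x in cube d, u x j * fderiv ℝ φ x (EuclideanSpace.single i 1)
        = - ∫ x in cube d, Du x (EuclideanSpace.single i 1) j * φ x

/-!
Since `G_h` is even, `(u, v) ↦ ∫_{𝕋³} u · G_h ∗ v` is a symmetric bilinear form on periodic
bounded fields. Expanding the penalty, its quadratic term `∫ u · G_h ∗ u` cancels the one in
`E_h(u)`, and the functional becomes `(1/h) (|𝕋³| + ∫ uⁿ⁻¹ · G_h ∗ uⁿ⁻¹ - 2 ∫ u · G_h ∗ uⁿ⁻¹)`.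
Minimizing it means maximizing `∫ u · G_h ∗ uⁿ⁻¹`, which is done pointwise: for `|u| ≤ 1`,
`u · G_h ∗ uⁿ⁻¹ ≤ |G_h ∗ uⁿ⁻¹|`, with equality where `G_h ∗ uⁿ⁻¹ ≠ 0` only for `u = uⁿ`.
A minimizer attains the maximal integral, so equality holds a.e. on the unit cube, and by
periodicity a.e. on `ℝ³`.
-/

open scoped Pointwise

section HeatKernel

variable {d : ℕ} {h : ℝ}

lemma heatKer_pos (hh : 0 < h) (z : Euc d) : 0 < heatKer d h z := by
  unfold heatKer; positivity

lemma heatKer_neg (z : Euc d) : heatKer d h (-z) = heatKer d h z := by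
  simp [heatKer]

lemma continuous_heatKer : Continuous (heatKer d h) := by
  unfold heatKer; fun_prop

lemma integrable_heatKer (hh : 0 < h) : Integrable (heatKer d h) := by
  have hG := GaussianFourier.integrable_cexp_neg_mul_sq_norm_add (V := Euc d)
    (b := ((4 * h)⁻¹ : ℝ)) (by simp only [Complex.ofReal_re]; positivity) 0 0
  refine (hG.norm.const_mul ((4 * π * h) ^ (-(d : ℝ) / 2))).congr (.of_forall fun z => ?_)
  simp only [heatKer, Complex.norm_exp, zero_mul, add_zero]
  norm_cast
  ring_nf

end HeatKernel

section Torus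

variable {d : ℕ}

abbrev intLattice (d : ℕ) : AddSubgroup (Euc d) :=
  (Submodule.span ℤ (Set.range (EuclideanSpace.basisFun (Fin d) ℝ).toBasis)).toAddSubgroup

lemma cube_eq_fundamentalDomain :
    cube d = ZSpan.fundamentalDomain (EuclideanSpace.basisFun (Fin d) ℝ).toBasis := by
  ext x; simp [cube, ZSpan.fundamentalDomain, Set.mem_Ico]

lemma measurableSet_cube : MeasurableSet (cube d) :=
  cube_eq_fundamentalDomain ▸ ZSpan.fundamentalDomain_measurableSet _

lemma volume_cube_lt_top : volume (cube d) < ⊤ :=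
  cube_eq_fundamentalDomain ▸ (ZSpan.fundamentalDomain_isBounded _).measure_lt_top

lemma isAddFundamentalDomain_cube : IsAddFundamentalDomain (intLattice d) (cube d) volume :=
  cube_eq_fundamentalDomain ▸ ZSpan.isAddFundamentalDomain' _ volume

instance : Countable (intLattice d) :=
  inferInstanceAs
    (Countable (Submodule.span ℤ (Set.range (EuclideanSpace.basisFun (Fin d) ℝ).toBasis)))

lemma ZPeriodic.vadd_intLattice {α : Type*} {f : Euc d → α} (hf : ZPeriodic f)
    (g : intLattice d) (x : Euc d) : f (g +ᵥ x) = f x := by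
  choose k hk using (Module.Basis.mem_span_iff_repr_mem ℤ _ _).1 g.2
  have hg : (g : Euc d) = intVec k := by
    ext i
    simpa [intVec] using (hk i).symm
  rw [AddSubgroup.vadd_def, vadd_eq_add, hg, add_comm, hf]

lemma setIntegral_cube_comp_add_right {E : Type*} [NormedAddCommGroup E] [NormedSpace ℝ E]
    {f : Euc d → E} (hf : ZPeriodic f) (z : Euc d) :
    ∫ x in cube d, f (x + z) = ∫ x in cube d, f x := by
  have hpre : (· + z) ⁻¹' (z +ᵥ cube d) = cube d := by
    ext x; simp [Set.mem_vadd_set_iff_neg_vadd_mem, add_comm x z]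
  have hshift := (measurePreserving_add_right volume z).setIntegral_preimage_emb
    (MeasurableEquiv.addRight z).measurableEmbedding f (z +ᵥ cube d)
  rw [hpre] at hshift
  rw [hshift]
  exact (isAddFundamentalDomain_cube.vadd_of_comm z).setIntegral_eq isAddFundamentalDomain_cube
    hf.vadd_intLattice

lemma ae_of_ae_restrict_cube {p : Euc d → Prop} (hp : ZPeriodic p)
    (hcube : ∀ᵐ x ∂volume.restrict (cube d), p x) : ∀ᵐ x, p x := by
  rw [ae_restrict_iff' measurableSet_cube, ae_iff] at hcube
  rw [ae_iff]
  have hnull : volume ({x | ¬p x} ∩ cube d) = 0 :=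
    measure_mono_null (by intro x hx hpx; exact hx.1 (hpx hx.2)) hcube
  refine isAddFundamentalDomain_cube.measure_zero_of_invariant _ (fun g => ?_) hnull
  ext x
  simp [Set.mem_vadd_set_iff_neg_vadd_mem, hp.vadd_intLattice]

end Torus

section HeatConv

variable {d m : ℕ} {h C C' : ℝ} {u v : Euc d → Euc m}

lemma ae_norm_heatKer_smul_comp_sub_le (hh : 0 < h) (hub : ∀ᵐ y, ‖u y‖ ≤ C) (x : Euc d) :
    ∀ᵐ z, ‖heatKer d h z • u (x - z)‖ ≤ C * heatKer d h z := by
  filter_upwards [(Measure.measurePreserving_sub_left volume x).quasiMeasurePreserving.ae hub]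
    with z hz
  rw [norm_smul, Real.norm_of_nonneg (heatKer_pos hh z).le, mul_comm]
  exact mul_le_mul_of_nonneg_right hz (heatKer_pos hh z).le

lemma integrable_heatKer_smul_comp_sub (hh : 0 < h) (hu : Measurable u)
    (hub : ∀ᵐ y, ‖u y‖ ≤ C) (x : Euc d) :
    Integrable (fun z => heatKer d h z • u (x - z)) :=
  ((integrable_heatKer hh).const_mul C).mono'
    (continuous_heatKer.measurable.smul
      (hu.comp (measurable_const.sub measurable_id))).aestronglyMeasurable
    (ae_norm_heatKer_smul_comp_sub_le hh hub x)

lemma norm_heatConv_le (hh : 0 < h) (hub : ∀ᵐ y, ‖u y‖ ≤ C) (x : Euc d) :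
    ‖heatConv h u x‖ ≤ C * ∫ z, heatKer d h z := by
  rw [← integral_const_mul]
  exact norm_integral_le_of_norm_le ((integrable_heatKer hh).const_mul C)
    (ae_norm_heatKer_smul_comp_sub_le hh hub x)

lemma measurable_heatConv (hu : Measurable u) : Measurable (heatConv h u) := by
  have hmeas : Measurable fun p : Euc d × Euc d => heatKer d h p.2 • u (p.1 - p.2) :=
    (continuous_heatKer.measurable.comp measurable_snd).smul
      (hu.comp (measurable_fst.sub measurable_snd))
  exact hmeas.stronglyMeasurable.integral_prod_right'.measurable

lemma ZPeriodic.heatConv (hu : ZPeriodic u) : ZPeriodic (heatConv h u) := by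
  intro x k
  simp only [_root_.heatConv, add_sub_right_comm, hu _ k]

lemma heatConv_sub (hh : 0 < h) (hu : Measurable u) (hv : Measurable v)
    (hub : ∀ᵐ y, ‖u y‖ ≤ C) (hvb : ∀ᵐ y, ‖v y‖ ≤ C') (x : Euc d) :
    heatConv h (u - v) x = heatConv h u x - heatConv h v x := by
  simp only [_root_.heatConv, Pi.sub_apply, smul_sub]
  exact integral_sub (integrable_heatKer_smul_comp_sub hh hu hub x)
    (integrable_heatKer_smul_comp_sub hh hv hvb x)

end HeatConv

section HeatPairing

variable {d m : ℕ} {h C C' C'' : ℝ} {u v w : Euc d → Euc m}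

def heatPairing (h : ℝ) (u v : Euc d → Euc m) : ℝ :=
  ∫ x in cube d, ⟪u x, heatConv h v x⟫

lemma integrableOn_inner_heatConv (hh : 0 < h) (hu : Measurable u) (hv : Measurable v)
    (hub : ∀ᵐ y, ‖u y‖ ≤ C) (hvb : ∀ᵐ y, ‖v y‖ ≤ C') :
    IntegrableOn (fun x => ⟪u x, heatConv h v x⟫) (cube d) := by
  refine Integrable.mono' (g := fun _ => C * (C' * ∫ z, heatKer d h z))
    (integrableOn_const volume_cube_lt_top.ne)
    (hu.inner (measurable_heatConv hv)).aestronglyMeasurable ?_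
  filter_upwards [ae_restrict_of_ae hub] with x hx
  rw [Real.norm_eq_abs]
  exact (abs_real_inner_le_norm _ _).trans
    (mul_le_mul hx (norm_heatConv_le hh hvb x) (norm_nonneg _) ((norm_nonneg _).trans hx))

lemma integrable_heatKer_mul_inner_comp_sub (hh : 0 < h) (hu : Measurable u) (hv : Measurable v)
    (hub : ∀ᵐ y, ‖u y‖ ≤ C) (hvb : ∀ᵐ y, ‖v y‖ ≤ C') :
    Integrable (Function.uncurry fun x z => heatKer d h z * ⟪u x, v (x - z)⟫)
      ((volume.restrict (cube d)).prod volume) := by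
  have hac : (volume.restrict (cube d)).prod (volume : Measure (Euc d)) ≪ volume.prod volume :=
    (Measure.absolutelyContinuous_of_le Measure.restrict_le_self).prod .rfl
  have hub' : ∀ᵐ p ∂(volume.restrict (cube d)).prod (volume : Measure (Euc d)),
      ‖u p.1‖ ≤ C :=
    Measure.quasiMeasurePreserving_fst.ae (ae_restrict_of_ae hub)
  have hvb' : ∀ᵐ p ∂(volume.restrict (cube d)).prod (volume : Measure (Euc d)),
      ‖v (p.1 - p.2)‖ ≤ C' :=
    ((quasiMeasurePreserving_sub volume volume).mono_left hac).ae hvb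
  have hmeas : Measurable (Function.uncurry fun x z => heatKer d h z * ⟪u x, v (x - z)⟫) :=
    (continuous_heatKer.measurable.comp measurable_snd).mul ((hu.comp measurable_fst).inner
      (hv.comp (measurable_fst.sub measurable_snd)))
  have hbound : Integrable (fun p : Euc d × Euc d => C * C' * heatKer d h p.2)
      ((volume.restrict (cube d)).prod volume) :=
    (integrableOn_const (C := C * C') volume_cube_lt_top.ne).mul_prod (integrable_heatKer hh)
  refine hbound.mono' hmeas.aestronglyMeasurable ?_
  filter_upwards [hub', hvb'] with p hu hv
  rw [Function.uncurry_apply_pair, Real.norm_eq_abs, abs_mul,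
    abs_of_pos (heatKer_pos hh p.2), mul_comm]
  exact mul_le_mul_of_nonneg_right ((abs_real_inner_le_norm _ _).trans
    (mul_le_mul hu hv (norm_nonneg _) ((norm_nonneg _).trans hu))) (heatKer_pos hh p.2).le

lemma heatPairing_eq_integral_heatKer_mul (hh : 0 < h) (hu : Measurable u) (hv : Measurable v)
    (hub : ∀ᵐ y, ‖u y‖ ≤ C) (hvb : ∀ᵐ y, ‖v y‖ ≤ C') :
    heatPairing h u v = ∫ z, heatKer d h z * ∫ x in cube d, ⟪u x, v (x - z)⟫ := by
  have hinner : ∀ x, ⟪u x, heatConv h v x⟫ = ∫ z, heatKer d h z * ⟪u x, v (x - z)⟫ := fun x => by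
    simp only [heatConv, ← integral_inner (integrable_heatKer_smul_comp_sub hh hv hvb x),
      real_inner_smul_right]
  simp only [heatPairing, hinner, ← integral_const_mul]
  exact integral_integral_swap (integrable_heatKer_mul_inner_comp_sub hh hu hv hub hvb)

lemma heatPairing_comm (hh : 0 < h) (hu : Measurable u) (hv : Measurable v)
    (hup : ZPeriodic u) (hvp : ZPeriodic v) (hub : ∀ᵐ y, ‖u y‖ ≤ C) (hvb : ∀ᵐ y, ‖v y‖ ≤ C') :
    heatPairing h u v = heatPairing h v u := by
  have hshift : ∀ z, ∫ x in cube d, ⟪u x, v (x - z)⟫ = ∫ x in cube d, ⟪v x, u (x - -z)⟫ := by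
    intro z
    have hper : ZPeriodic fun x => ⟪v x, u (x + z)⟫ := fun x k => by
      simp only [add_right_comm x, hup _ k, hvp x k]
    simp only [sub_neg_eq_add]
    rw [← setIntegral_cube_comp_add_right hper (-z)]
    simp only [← sub_eq_add_neg, sub_add_cancel, real_inner_comm]
  rw [heatPairing_eq_integral_heatKer_mul hh hu hv hub hvb,
    heatPairing_eq_integral_heatKer_mul hh hv hu hvb hub,
    ← integral_neg_eq_self (fun z => heatKer d h z * ∫ x in cube d, ⟪v x, u (x - z)⟫) volume]
  simp only [hshift, heatKer_neg]

lemma heatPairing_sub_left (hh : 0 < h) (hu : Measurable u) (hv : Measurable v)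
    (hw : Measurable w) (hub : ∀ᵐ y, ‖u y‖ ≤ C) (hvb : ∀ᵐ y, ‖v y‖ ≤ C')
    (hwb : ∀ᵐ y, ‖w y‖ ≤ C'') :
    heatPairing h (u - w) v = heatPairing h u v - heatPairing h w v := by
  simp only [heatPairing, Pi.sub_apply, inner_sub_left]
  exact integral_sub (integrableOn_inner_heatConv hh hu hv hub hvb)
    (integrableOn_inner_heatConv hh hw hv hwb hvb)

lemma heatPairing_sub_right (hh : 0 < h) (hu : Measurable u) (hv : Measurable v)
    (hw : Measurable w) (hub : ∀ᵐ y, ‖u y‖ ≤ C) (hvb : ∀ᵐ y, ‖v y‖ ≤ C')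
    (hwb : ∀ᵐ y, ‖w y‖ ≤ C'') :
    heatPairing h u (v - w) = heatPairing h u v - heatPairing h u w := by
  simp only [heatPairing, heatConv_sub hh hv hw hvb hwb, inner_sub_right]
  exact integral_sub (integrableOn_inner_heatConv hh hu hv hub hvb)
    (integrableOn_inner_heatConv hh hu hw hub hwb)

lemma heatPairing_sub_sub (hh : 0 < h) (hu : Measurable u) (hw : Measurable w)
    (hup : ZPeriodic u) (hwp : ZPeriodic w) (hub : ∀ᵐ y, ‖u y‖ ≤ C) (hwb : ∀ᵐ y, ‖w y‖ ≤ C') :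
    heatPairing h (u - w) (u - w)
      = heatPairing h u u - 2 * heatPairing h u w + heatPairing h w w := by
  have huwb : ∀ᵐ y, ‖(u - w) y‖ ≤ C + C' := by
    filter_upwards [hub, hwb] with y hu hw using (norm_sub_le _ _).trans (add_le_add hu hw)
  rw [heatPairing_sub_left hh hu (hu.sub hw) hw hub huwb hwb,
    heatPairing_sub_right hh hu hu hw hub hub hwb, heatPairing_sub_right hh hw hu hw hwb hub hwb,
    heatPairing_comm hh hw hu hwp hup hwb hub]
  ring

end HeatPairing

lemma real_inner_le_norm_of_norm_le_one {E : Type*} [SeminormedAddCommGroup E]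
    [InnerProductSpace ℝ E] {v : E} (hv : ‖v‖ ≤ 1) (w : E) : ⟪v, w⟫ ≤ ‖w‖ :=
  (real_inner_le_norm v w).trans (mul_le_of_le_one_left (norm_nonneg w) hv)

lemma eq_inv_norm_smul_of_real_inner_eq_norm {E : Type*} [NormedAddCommGroup E]
    [InnerProductSpace ℝ E] {v w : E} (hv : ‖v‖ ≤ 1) (hw : w ≠ 0) (hvw : ⟪v, w⟫ = ‖w‖) :
    v = ‖w‖⁻¹ • w := by
  have hw' : 0 < ‖w‖ := norm_pos_iff.2 hw
  have hv1 : ‖v‖ = 1 := le_antisymm hv <| le_of_mul_le_mul_right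
    (by simpa [hvw] using real_inner_le_norm v w) hw'
  have hsmul := inner_eq_norm_mul_iff_real.1 (by rw [hvw, hv1, one_mul])
  rwa [hv1, one_smul, ← eq_inv_smul_iff₀ hw'.ne'] at hsmul

section Thresholding

variable {h C C' : ℝ} {u w : Euc 3 → Euc 2}

lemma measurable_threshStep (hw : Measurable w) : Measurable (threshStep h w) :=
  (measurable_heatConv hw).norm.inv.smul (measurable_heatConv hw)

lemma ZPeriodic.threshStep (hw : ZPeriodic w) : ZPeriodic (threshStep h w) := fun x k => by
  simp only [_root_.threshStep, hw.heatConv x k]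

lemma norm_threshStep_le (w : Euc 3 → Euc 2) (x : Euc 3) : ‖threshStep h w x‖ ≤ 1 := by
  rw [threshStep, norm_smul, norm_inv, norm_norm]
  exact inv_mul_le_one

lemma inner_threshStep_heatConv (w : Euc 3 → Euc 2) (x : Euc 3) :
    ⟪threshStep h w x, heatConv h w x⟫ = ‖heatConv h w x‖ := by
  rw [threshStep, real_inner_smul_left, real_inner_self_eq_norm_sq]
  rcases eq_or_ne ‖heatConv h w x‖ 0 with h0 | h0
  · simp [h0]
  · field_simp

lemma heatPairing_threshStep :
    heatPairing h (threshStep h w) w = ∫ x in cube 3, ‖heatConv h w x‖ := by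
  simp only [heatPairing, inner_threshStep_heatConv]

lemma integrableOn_norm_heatConv (hh : 0 < h) (hw : Measurable w) (hwb : ∀ᵐ y, ‖w y‖ ≤ C) :
    IntegrableOn (fun x => ‖heatConv h w x‖) (cube 3) := by
  simpa only [inner_threshStep_heatConv] using integrableOn_inner_heatConv hh
    (measurable_threshStep hw) hw (.of_forall (norm_threshStep_le (h := h) w)) hwb

lemma heatPairing_le_heatPairing_threshStep (hh : 0 < h) (hu : Measurable u) (hw : Measurable w)
    (hub : ∀ᵐ y, ‖u y‖ ≤ 1) (hwb : ∀ᵐ y, ‖w y‖ ≤ C) :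
    heatPairing h u w ≤ heatPairing h (threshStep h w) w := by
  rw [heatPairing_threshStep]
  refine integral_mono_ae (integrableOn_inner_heatConv hh hu hw hub hwb)
    (integrableOn_norm_heatConv hh hw hwb) ?_
  filter_upwards [ae_restrict_of_ae hub] with x hx
  exact real_inner_le_norm_of_norm_le_one hx _

lemma ae_eq_threshStep_of_heatPairing_eq (hh : 0 < h) (hu : Measurable u) (hw : Measurable w)
    (hub : ∀ᵐ y, ‖u y‖ ≤ 1) (hwb : ∀ᵐ y, ‖w y‖ ≤ C)
    (heq : heatPairing h u w = heatPairing h (threshStep h w) w) :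
    ∀ᵐ x ∂volume.restrict (cube 3), heatConv h w x ≠ 0 → u x = threshStep h w x := by
  have hle : (fun x => ⟪u x, heatConv h w x⟫) ≤ᵐ[volume.restrict (cube 3)]
      fun x => ‖heatConv h w x‖ := by
    filter_upwards [ae_restrict_of_ae hub] with x hx
    exact real_inner_le_norm_of_norm_le_one hx _
  rw [heatPairing_threshStep] at heq
  filter_upwards [(integral_eq_iff_of_ae_le (integrableOn_inner_heatConv hh hu hw hub hwb)
    (integrableOn_norm_heatConv hh hw hwb) hle).1 heq, ae_restrict_of_ae hub] with x hx hx1 hne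
  exact eq_inv_norm_smul_of_real_inner_eq_norm hx1 hne hx

lemma Eh_eq_sub_heatPairing (hh : 0 < h) (hu : Measurable u) (hub : ∀ᵐ y, ‖u y‖ ≤ C) :
    Eh h u = (1 / h) * (volume.real (cube 3) - heatPairing h u u) := by
  rw [Eh, heatPairing, integral_sub (integrableOn_const (C := (1 : ℝ)) volume_cube_lt_top.ne)
    (integrableOn_inner_heatConv hh hu hu hub hub), setIntegral_const, smul_eq_mul, mul_one]

lemma Eh_add_heatPairing_sub_eq (hh : 0 < h) (hu : Measurable u) (hw : Measurable w)
    (hup : ZPeriodic u) (hwp : ZPeriodic w) (hub : ∀ᵐ y, ‖u y‖ ≤ C) (hwb : ∀ᵐ y, ‖w y‖ ≤ C') :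
    Eh h u + (1 / h) * ∫ x in cube 3, ⟪u x - w x, heatConv h (fun y => u y - w y) x⟫
      = (1 / h) * (volume.real (cube 3) + heatPairing h w w - 2 * heatPairing h u w) := by
  change Eh h u + (1 / h) * heatPairing h (u - w) (u - w) = _
  rw [Eh_eq_sub_heatPairing hh hu hub, heatPairing_sub_sub hh hu hw hup hwp hub hwb]
  ring

end Thresholding

/-- One step of the thresholding scheme is a minimizing movement, and any other
minimizer agrees a.e. with the thresholding step wherever the diffused field does not vanish. -/
theorem thresholding_is_minimizing_movement
    (h : ℝ) (hh : 0 < h) (uprev : Euc 3 → Euc 2)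
    (humeas : Measurable uprev) (huper : ZPeriodic uprev) (huunit : ∀ x, ‖uprev x‖ = 1) :
    (∀ u : Euc 3 → Euc 2, Measurable u → ZPeriodic u →
        (∀ᵐ x ∂(volume : Measure (Euc 3)), ‖u x‖ ≤ 1) →
        Eh h (threshStep h uprev) + (1 / h) * ∫ x in cube 3,
            ⟪threshStep h uprev x - uprev x,
              heatConv h (fun y => threshStep h uprev y - uprev y) x⟫
          ≤ Eh h u + (1 / h) * ∫ x in cube 3,
            ⟪u x - uprev x, heatConv h (fun y => u y - uprev y) x⟫) ∧
    (∀ u : Euc 3 → Euc 2, Measurable u → ZPeriodic u →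
        (∀ᵐ x ∂(volume : Measure (Euc 3)), ‖u x‖ ≤ 1) →
        (∀ v : Euc 3 → Euc 2, Measurable v → ZPeriodic v →
            (∀ᵐ x ∂(volume : Measure (Euc 3)), ‖v x‖ ≤ 1) →
            Eh h u + (1 / h) * ∫ x in cube 3,
                ⟪u x - uprev x, heatConv h (fun y => u y - uprev y) x⟫
              ≤ Eh h v + (1 / h) * ∫ x in cube 3,
                ⟪v x - uprev x, heatConv h (fun y => v y - uprev y) x⟫) →
        ∀ᵐ x ∂(volume : Measure (Euc 3)),
          heatConv h uprev x ≠ 0 → u x = threshStep h uprev x) := by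
  have hpb : ∀ᵐ x, ‖uprev x‖ ≤ 1 := .of_forall fun x => (huunit x).le
  have htm : Measurable (threshStep h uprev) := measurable_threshStep humeas
  have htp : ZPeriodic (threshStep h uprev) := huper.threshStep
  have htb : ∀ᵐ x, ‖threshStep h uprev x‖ ≤ 1 := .of_forall (norm_threshStep_le uprev)
  refine ⟨fun u hu hup hub => ?_, fun u hu hup hub hmin => ?_⟩
  · rw [Eh_add_heatPairing_sub_eq hh htm humeas htp huper htb hpb,
      Eh_add_heatPairing_sub_eq hh hu humeas hup huper hub hpb]
    gcongr
    exact heatPairing_le_heatPairing_threshStep hh hu humeas hub hpb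
  · have hle := hmin _ htm htp htb
    rw [Eh_add_heatPairing_sub_eq hh htm humeas htp huper htb hpb,
      Eh_add_heatPairing_sub_eq hh hu humeas hup huper hub hpb] at hle
    have heq : heatPairing h u uprev = heatPairing h (threshStep h uprev) uprev :=
      (heatPairing_le_heatPairing_threshStep hh hu humeas hub hpb).antisymm <| by
        linarith [le_of_mul_le_mul_left hle (one_div_pos.2 hh)]
    refine ae_of_ae_restrict_cube (fun x k => ?_)
      (ae_eq_threshStep_of_heatPairing_eq hh hu humeas hub hpb heq)
    simp only [huper.heatConv x k, hup x k, htp x k]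
end
end

section
/- Energy-dissipation estimate: for any h > 0, any measurable initial unit vector field u⁰ : 𝕋³ → 𝕊¹, and any N ∈ ℕ, the iterates of the thresholding scheme satisfy E_h(u^N) + h ∑_{n=1}^{N} ∫_{𝕋³} |G_{h/2}∗((u^n − u^{n−1})/h)|² dx ≤ E_h(u⁰). -/
open MeasureTheory Real Filter
open scoped RealInnerProductSpace Topology NNReal

noncomputable section

open scoped Pointwise

namespace HK

variable {d : ℕ} {h s t : ℝ}

lemma fourPiPos (hh : 0 < h) : 0 < 4 * π * h := by positivity

lemma heatKer_pos (hh : 0 < h) (z : Euc d) : 0 < heatKer d h z := by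
  unfold heatKer
  positivity

lemma heatKer_nonneg (hh : 0 < h) (z : Euc d) : 0 ≤ heatKer d h z := (heatKer_pos hh z).le

lemma heatKer_continuous (d : ℕ) (h : ℝ) : Continuous (heatKer d h) := by
  unfold heatKer
  fun_prop

lemma heatKer_neg (z : Euc d) : heatKer d h (-z) = heatKer d h z := by
  simp [heatKer]

lemma heatKer_eq (hh : 0 < h) (z : Euc d) :
    heatKer d h z = (4 * π * h) ^ (-(d : ℝ) / 2) * Real.exp (-(4 * h)⁻¹ * ‖z‖ ^ 2) := by
  rw [heatKer]
  congr 1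
  rw [neg_div, neg_mul, inv_mul_eq_div]

lemma finrank_euc : Module.finrank ℝ (Euc d) = d := by
  simp [finrank_euclideanSpace]

lemma integral_gauss (c : ℝ) (hc : 0 < c) :
    ∫ z : Euc d, Real.exp (-c * ‖z‖ ^ 2) = (π / c) ^ ((d : ℝ) / 2) := by
  rw [GaussianFourier.integral_rexp_neg_mul_sq_norm hc, finrank_euc]

lemma integral_heatKer (hh : 0 < h) : ∫ z : Euc d, heatKer d h z = 1 := by
  have h4 : (0:ℝ) < (4 * h)⁻¹ := by positivity
  simp_rw [heatKer_eq hh]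
  rw [integral_const_mul, integral_gauss _ h4]
  have : π / (4 * h)⁻¹ = 4 * π * h := by field_simp
  rw [this, neg_div, Real.rpow_neg (fourPiPos hh).le,
    inv_mul_cancel₀ (by positivity)]

lemma integrable_gauss (c : ℝ) (hc : 0 < c) :
    Integrable (fun z : Euc d => Real.exp (-c * ‖z‖ ^ 2)) := by
  have H := (GaussianFourier.integrable_cexp_neg_mul_sq_norm_add (V := Euc d)
    (b := (c : ℂ)) (by simpa using hc) 0 0).re
  refine H.congr (Filter.Eventually.of_forall fun z => ?_)
  have e : (-((c:ℝ):ℂ) * (‖z‖:ℂ)^2) = ((-(c * ‖z‖^2) : ℝ) : ℂ) := by push_cast; ring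
  simp only [zero_mul, add_zero, e, RCLike.re_to_complex, Complex.exp_ofReal_re, neg_mul]

lemma integrable_heatKer (hh : 0 < h) : Integrable (heatKer d h) := by
  have h4 : (0:ℝ) < (4 * h)⁻¹ := by positivity
  refine ((integrable_gauss (d := d) _ h4).const_mul ((4 * π * h) ^ (-(d : ℝ) / 2))).congr
    (Filter.Eventually.of_forall fun z => ?_)
  rw [heatKer_eq hh]

lemma sq_identity (a b : ℝ) (ha : 0 < a) (hb : 0 < b) (z w : Euc d) :
    a * ‖z‖^2 + b * ‖z - w‖^2
      = (a + b) * ‖z - (b/(a+b)) • w‖^2 + (a*b/(a+b)) * ‖w‖^2 := by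
  have hab : a + b ≠ 0 := by positivity
  have h1 : ‖z - w‖^2 = ‖z‖^2 - 2*⟪z,w⟫ + ‖w‖^2 := norm_sub_sq_real z w
  have h2 : ‖z - (b/(a+b)) • w‖^2
      = ‖z‖^2 - 2*((b/(a+b))*⟪z,w⟫) + (b/(a+b))^2*‖w‖^2 := by
    rw [norm_sub_sq_real, real_inner_smul_right, norm_smul]
    rw [mul_pow, Real.norm_eq_abs, sq_abs]
  rw [h1, h2]
  field_simp
  ring

lemma heatKer_conv (hs : 0 < s) (ht : 0 < t) (w : Euc d) :
    ∫ z : Euc d, heatKer d s z * heatKer d t (w - z) = heatKer d (s + t) w := by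
  have hst : 0 < s + t := by linarith
  have hs' : s ≠ 0 := ne_of_gt hs
  have ht' : t ≠ 0 := ne_of_gt ht
  have hst' : s + t ≠ 0 := ne_of_gt hst
  have hπ : π ≠ 0 := Real.pi_ne_zero
  set a : ℝ := (4*s)⁻¹ with ha_def
  set b : ℝ := (4*t)⁻¹ with hb_def
  have ha : 0 < a := by positivity
  have hb : 0 < b := by positivity
  have hab : 0 < a + b := by positivity
  have key : ∀ z : Euc d, heatKer d s z * heatKer d t (w - z)
      = ((4*π*s) ^ (-(d:ℝ)/2) * (4*π*t) ^ (-(d:ℝ)/2) * Real.exp (-(a*b/(a+b)) * ‖w‖^2))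
        * Real.exp (-(a+b) * ‖z - (b/(a+b)) • w‖^2) := by
    intro z
    rw [heatKer_eq hs, heatKer_eq ht, norm_sub_rev w z]
    have hexp : Real.exp (-a * ‖z‖^2) * Real.exp (-b * ‖z - w‖^2)
        = Real.exp (-(a*b/(a+b)) * ‖w‖^2) * Real.exp (-(a+b) * ‖z - (b/(a+b)) • w‖^2) := by
      rw [← Real.exp_add, ← Real.exp_add]
      congr 1
      nlinarith [sq_identity a b ha hb z w]
    calc (4*π*s) ^ (-(d:ℝ)/2) * Real.exp (-a * ‖z‖^2)
          * ((4*π*t) ^ (-(d:ℝ)/2) * Real.exp (-b * ‖z - w‖^2))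
        = (4*π*s) ^ (-(d:ℝ)/2) * (4*π*t) ^ (-(d:ℝ)/2)
          * (Real.exp (-a * ‖z‖^2) * Real.exp (-b * ‖z - w‖^2)) := by ring
      _ = _ := by rw [hexp]; ring
  simp_rw [key]
  rw [integral_const_mul]
  rw [show ∫ z : Euc d, Real.exp (-(a+b) * ‖z - (b/(a+b)) • w‖^2) = (π/(a+b)) ^ ((d:ℝ)/2) from by
    rw [integral_sub_right_eq_self (fun y : Euc d => Real.exp (-(a+b)*‖y‖^2)) ((b/(a+b)) • w)]
    exact integral_gauss _ hab]
  rw [heatKer_eq hst]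
  have hE : a*b/(a+b) = (4*(s+t))⁻¹ := by
    rw [ha_def, hb_def]; field_simp; ring
  have hC : (4*π*s) ^ (-(d:ℝ)/2) * (4*π*t) ^ (-(d:ℝ)/2) * (π/(a+b)) ^ ((d:ℝ)/2)
      = (4*π*(s+t)) ^ (-(d:ℝ)/2) := by
    have h1 : π/(a+b) = 4*π*s*t/(s+t) := by
      rw [ha_def, hb_def]; field_simp; ring
    rw [h1, neg_div, Real.rpow_neg (by positivity), Real.rpow_neg (by positivity),
      Real.rpow_neg (by positivity), ← Real.inv_rpow (by positivity),
      ← Real.inv_rpow (by positivity), ← Real.inv_rpow (by positivity),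
      ← Real.mul_rpow (by positivity) (by positivity),
      ← Real.mul_rpow (by positivity) (by positivity)]
    congr 1
    field_simp
  rw [hE, ← hC]
  ring

def bE (d : ℕ) : Module.Basis (Fin d) ℝ (Euc d) := (EuclideanSpace.basisFun (Fin d) ℝ).toBasis

lemma bE_repr (x : Euc d) (i : Fin d) : (bE d).repr x i = x i := by
  rw [bE, OrthonormalBasis.coe_toBasis_repr_apply, EuclideanSpace.basisFun_repr]

lemma cube_eq : cube d = ZSpan.fundamentalDomain (bE d) := by
  ext x
  simp only [cube, Set.mem_setOf_eq, ZSpan.mem_fundamentalDomain, bE_repr, Set.mem_Ico]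

abbrev lat (d : ℕ) := Submodule.span ℤ (Set.range ⇑(bE d))

lemma lat_coe (l : lat d) : ∃ k : Fin d → ℤ, (l : Euc d) = intVec k := by
  have hmem := (Module.Basis.mem_span_iff_repr_mem ℤ (bE d) (l : Euc d)).mp l.2
  choose k hk using fun i => hmem i
  refine ⟨k, PiLp.ext fun i => ?_⟩
  have := hk i
  rw [bE_repr] at this
  simpa [intVec] using this.symm

lemma periodic_vadd {α : Type*} {u : Euc d → α} (hu : ZPeriodic u) (l : lat d) (x : Euc d) :
    u (l +ᵥ x) = u x := by
  obtain ⟨k, hk⟩ := lat_coe l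
  have : l +ᵥ x = x + intVec k := by
    show (l : Euc d) + x = x + intVec k
    rw [hk, add_comm]
  rw [this, hu x k]

lemma measurableSet_cube : MeasurableSet (cube d) := by
  rw [cube_eq]; exact ZSpan.fundamentalDomain_measurableSet (bE d)

lemma volume_cube_lt_top : (volume : Measure (Euc d)) (cube d) < ⊤ := by
  rw [cube_eq]; exact (ZSpan.fundamentalDomain_isBounded (bE d)).measure_lt_top

instance : IsFiniteMeasure ((volume : Measure (Euc d)).restrict (cube d)) :=
  ⟨by rw [Measure.restrict_apply_univ]; exact volume_cube_lt_top⟩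

instance : MeasurableVAdd (lat d) (Euc d) :=
  { measurable_const_vadd := fun l => by
      show Measurable fun x : Euc d => (l : Euc d) + x
      exact measurable_id.const_add _
    measurable_vadd_const := fun x => by
      show Measurable fun l : lat d => (l : Euc d) + x
      exact measurable_subtype_coe.add_const _ }

instance : VAddInvariantMeasure (lat d) (Euc d) volume :=
  ⟨fun l s hs => by
    show volume ((fun x : Euc d => (l : Euc d) + x) ⁻¹' s) = volume s
    exact measure_preimage_add volume _ s⟩

instance : VAddCommClass (Euc d) (lat d) (Euc d) :=
  ⟨fun a s x => by
    show a + ((s : Euc d) + x) = (s : Euc d) + (a + x)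
    abel⟩

lemma shift_integral {F : Type*} [NormedAddCommGroup F] [NormedSpace ℝ F] {u : Euc d → F}
    (hper : ZPeriodic u) (z : Euc d) :
    ∫ x in cube d, u (x + z) = ∫ x in cube d, u x := by
  have hfd := ZSpan.isAddFundamentalDomain (bE d) (volume : Measure (Euc d))
  have hfd2 : IsAddFundamentalDomain (lat d) (z +ᵥ ZSpan.fundamentalDomain (bE d)) volume :=
    hfd.vadd_of_comm z
  have h1 : ∫ x in (z +ᵥ ZSpan.fundamentalDomain (bE d)), u x
      = ∫ x in ZSpan.fundamentalDomain (bE d), u x :=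
    hfd2.setIntegral_eq hfd (fun l x => periodic_vadd hper l x)
  have h2 : ∫ x in (z +ᵥ ZSpan.fundamentalDomain (bE d)), u x
      = ∫ x in ZSpan.fundamentalDomain (bE d), u (z + x) := by
    rw [show z +ᵥ ZSpan.fundamentalDomain (bE d)
        = (fun x => z + x) '' ZSpan.fundamentalDomain (bE d) from by
      rw [← Set.image_vadd]; rfl]
    exact (measurePreserving_add_left volume z).setIntegral_image_emb
      (measurableEmbedding_addLeft z) u _
  rw [cube_eq]
  calc ∫ x in ZSpan.fundamentalDomain (bE d), u (x + z)
      = ∫ x in ZSpan.fundamentalDomain (bE d), u (z + x) := by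
        congr 1; ext x; rw [add_comm]
    _ = ∫ x in ZSpan.fundamentalDomain (bE d), u x := by rw [← h2, h1]

section ConvPart
variable {d : ℕ} {h s t : ℝ}

lemma conv_integrand (hh : 0 < h) {u : Euc d → Euc 2} (hm : Measurable u)
    (hb : ∀ y, ‖u y‖ ≤ 1) (x : Euc d) :
    Integrable (fun z : Euc d => heatKer d h z • u (x - z)) := by
  refine Integrable.mono' (integrable_heatKer hh) ?_ (Filter.Eventually.of_forall fun z => ?_)
  · exact (((heatKer_continuous d h).measurable).smul
      (hm.comp (measurable_const.sub measurable_id))).stronglyMeasurable.aestronglyMeasurable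
  · rw [norm_smul, Real.norm_eq_abs, abs_of_nonneg (heatKer_nonneg hh z)]
    calc heatKer d h z * ‖u (x - z)‖ ≤ heatKer d h z * 1 :=
          mul_le_mul_of_nonneg_left (hb _) (heatKer_nonneg hh z)
      _ = heatKer d h z := mul_one _

lemma heatConv_norm_le (hh : 0 < h) {u : Euc d → Euc 2} (hm : Measurable u)
    (hb : ∀ y, ‖u y‖ ≤ 1) (x : Euc d) : ‖heatConv h u x‖ ≤ 1 := by
  rw [heatConv]
  calc ‖∫ z : Euc d, heatKer d h z • u (x - z)‖
      ≤ ∫ z : Euc d, ‖heatKer d h z • u (x - z)‖ := norm_integral_le_integral_norm _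
    _ ≤ ∫ z : Euc d, heatKer d h z := by
        refine integral_mono (conv_integrand hh hm hb x).norm (integrable_heatKer hh) fun z => ?_
        rw [norm_smul, Real.norm_eq_abs, abs_of_nonneg (heatKer_nonneg hh z)]
        calc heatKer d h z * ‖u (x - z)‖ ≤ heatKer d h z * 1 :=
              mul_le_mul_of_nonneg_left (hb _) (heatKer_nonneg hh z)
          _ = heatKer d h z := mul_one _
    _ = 1 := integral_heatKer hh

lemma heatConv_stronglyMeasurable (h : ℝ) {u : Euc d → Euc 2} (hm : Measurable u) :
    StronglyMeasurable (heatConv h u) := by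
  have hrw : heatConv h u = fun x => ∫ y : Euc d, heatKer d h (x - y) • u y := by
    funext x
    rw [heatConv, ← integral_sub_left_eq_self (fun z => heatKer d h z • u (x - z)) volume x]
    simp only [sub_sub_cancel]
  rw [hrw]
  exact StronglyMeasurable.integral_prod_right'
    (((heatKer_continuous d h).measurable.comp
      (measurable_fst.sub measurable_snd)).smul (hm.comp measurable_snd)).stronglyMeasurable

lemma heatConv_measurable (h : ℝ) {u : Euc d → Euc 2} (hm : Measurable u) :
    Measurable (heatConv h u) := (heatConv_stronglyMeasurable h hm).measurable

lemma heatConv_periodic (h : ℝ) {u : Euc d → Euc 2} (hper : ZPeriodic u) :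
    ZPeriodic (heatConv h u) := by
  intro x k
  unfold heatConv
  congr 1
  funext z
  have : x + intVec k - z = (x - z) + intVec k := by abel
  rw [this, hper]

/-- The invariant preserved by the scheme. -/
def Good {d : ℕ} (u : Euc d → Euc 2) : Prop :=
  Measurable u ∧ ZPeriodic u ∧ ∀ x, ‖u x‖ ≤ 1

lemma Good.conv (hh : 0 < h) {u : Euc d → Euc 2} (hu : Good u) : Good (heatConv h u) :=
  ⟨heatConv_measurable h hu.1, heatConv_periodic h hu.2.1,
    fun x => heatConv_norm_le hh hu.1 hu.2.2 x⟩

lemma Good.step (hh : 0 < h) {u : Euc 3 → Euc 2} (hu : Good u) :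
    Good (threshStep h u) := by
  obtain ⟨hm, hper, hb⟩ := (Good.conv hh hu : Good (heatConv h u))
  refine ⟨(hm.norm.inv).smul hm, fun x k => by unfold _root_.threshStep; rw [hper x k], fun x => ?_⟩
  rw [threshStep, norm_smul, Real.norm_eq_abs, abs_inv, abs_norm]
  rcases eq_or_ne (heatConv h u x) 0 with h0 | h0
  · simp [h0]
  · rw [inv_mul_cancel₀ (norm_ne_zero_iff.mpr h0)]

end ConvPart

section Sym
variable {d : ℕ} {h : ℝ}

lemma torus_fubini (hh : 0 < h) {φ : Euc d × Euc d → ℝ}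
    (hφm : Measurable φ) (hφb : ∀ p, |φ p| ≤ 1) :
    ∫ x in cube d, ∫ z, heatKer d h z * φ (x, z)
      = ∫ z, ∫ x in cube d, heatKer d h z * φ (x, z) := by
  apply integral_integral_swap (f := fun x z => heatKer d h z * φ (x, z))
  refine Integrable.mono' ((integrable_const (1:ℝ)).mul_prod (integrable_heatKer hh))
    ?_ (Filter.Eventually.of_forall fun p => ?_)
  · exact (((heatKer_continuous d h).measurable.comp measurable_snd).mul
      hφm).stronglyMeasurable.aestronglyMeasurable
  · show ‖heatKer d h p.2 * φ p‖ ≤ 1 * heatKer d h p.2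
    rw [Real.norm_eq_abs, abs_mul, abs_of_nonneg (heatKer_nonneg hh _), one_mul]
    calc heatKer d h p.2 * |φ p| ≤ heatKer d h p.2 * 1 :=
          mul_le_mul_of_nonneg_left (hφb p) (heatKer_nonneg hh _)
      _ = heatKer d h p.2 := mul_one _

lemma conv_inner_eq (hh : 0 < h) {f g : Euc d → Euc 2} (Gf : Good f) (Gg : Good g) :
    ∫ x in cube d, ⟪heatConv h f x, g x⟫
      = ∫ z, heatKer d h z * ∫ x in cube d, ⟪f (x - z), g x⟫ := by
  have step1 : ∀ x, ⟪heatConv h f x, g x⟫ = ∫ z, heatKer d h z * ⟪f (x - z), g x⟫ := by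
    intro x
    rw [real_inner_comm, heatConv, ← integral_inner (conv_integrand hh Gf.1 Gf.2.2 x) (g x)]
    congr 1
    funext z
    rw [real_inner_smul_right, real_inner_comm]
  calc ∫ x in cube d, ⟪heatConv h f x, g x⟫
      = ∫ x in cube d, ∫ z, heatKer d h z * ⟪f (x - z), g x⟫ :=
        integral_congr_ae (Filter.Eventually.of_forall fun x => step1 x)
    _ = ∫ z, ∫ x in cube d, heatKer d h z * ⟪f (x - z), g x⟫ := by
        refine torus_fubini hh (φ := fun p => ⟪f (p.1 - p.2), g p.1⟫) ?_ ?_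
        · exact (Gf.1.comp (measurable_fst.sub measurable_snd)).inner (Gg.1.comp measurable_fst)
        · intro p
          calc |⟪f (p.1 - p.2), g p.1⟫| ≤ ‖f (p.1 - p.2)‖ * ‖g p.1‖ := abs_real_inner_le_norm _ _
            _ ≤ 1 * 1 := mul_le_mul (Gf.2.2 _) (Gg.2.2 _) (norm_nonneg _) zero_le_one
            _ = 1 := mul_one _
    _ = ∫ z, heatKer d h z * ∫ x in cube d, ⟪f (x - z), g x⟫ := by
        congr 1
        funext z
        exact integral_const_mul _ _

lemma heatConv_symm (hh : 0 < h) {f g : Euc d → Euc 2} (Gf : Good f) (Gg : Good g) :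
    ∫ x in cube d, ⟪f x, heatConv h g x⟫ = ∫ x in cube d, ⟪heatConv h f x, g x⟫ := by
  have A := conv_inner_eq hh Gf Gg
  have B := conv_inner_eq hh Gg Gf
  have L : ∫ x in cube d, ⟪f x, heatConv h g x⟫
      = ∫ x in cube d, ⟪heatConv h g x, f x⟫ :=
    integral_congr_ae (Filter.Eventually.of_forall fun x => real_inner_comm _ _)
  rw [L, B, A]
  have hz : ∀ z : Euc d, ∫ x in cube d, ⟪g (x - z), f x⟫
      = ∫ x in cube d, ⟪g x, f (x + z)⟫ := by
    intro z
    have hper : ZPeriodic fun x => ⟪g (x - z), f x⟫ := by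
      intro x k
      have h1 : x + intVec k - z = (x - z) + intVec k := by abel
      beta_reduce
      rw [h1, Gg.2.1, Gf.2.1]
    have := shift_integral hper z
    rw [← this]
    refine integral_congr_ae (Filter.Eventually.of_forall fun x => ?_)
    have h2 : x + z - z = x := by abel
    beta_reduce
    rw [h2]
  calc ∫ z, heatKer d h z * ∫ x in cube d, ⟪g (x - z), f x⟫
      = ∫ z, heatKer d h z * ∫ x in cube d, ⟪g x, f (x + z)⟫ := by
        congr 1; funext z; rw [hz z]
    _ = ∫ z, heatKer d h (-z) * ∫ x in cube d, ⟪g x, f (x + -z)⟫ :=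
        (integral_neg_eq_self
          (fun z => heatKer d h z * ∫ x in cube d, ⟪g x, f (x + z)⟫) volume).symm
    _ = ∫ z, heatKer d h z * ∫ x in cube d, ⟪f (x - z), g x⟫ := by
        congr 1
        funext z
        rw [heatKer_neg]
        congr 1
        refine integral_congr_ae (Filter.Eventually.of_forall fun x => ?_)
        beta_reduce
        rw [← sub_eq_add_neg, real_inner_comm]

end Sym

section Semigroup
variable {d : ℕ} {s t : ℝ}

lemma integral_heatKer_shift (ht : 0 < t) (z : Euc d) :
    ∫ y : Euc d, heatKer d t (y - z) = 1 := by
  rw [integral_sub_right_eq_self (heatKer d t) z]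
  exact integral_heatKer ht

lemma heatConv_heatConv (hs : 0 < s) (ht : 0 < t) {u : Euc d → Euc 2}
    (hm : Measurable u) (hb : ∀ y, ‖u y‖ ≤ 1) (x : Euc d) :
    heatConv s (heatConv t u) x = heatConv (s + t) u x := by
  have inner_eq : ∀ z : Euc d, heatConv t u (x - z)
      = ∫ y : Euc d, heatKer d t (y - z) • u (x - y) := by
    intro z
    rw [heatConv, ← integral_add_right_eq_self (fun y => heatKer d t (y - z) • u (x - y)) z]
    refine integral_congr_ae (Filter.Eventually.of_forall fun w => ?_)
    beta_reduce
    rw [add_sub_cancel_right, show x - (w + z) = x - z - w from by abel]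
  have hzint : ∀ z : Euc d, Integrable fun y : Euc d =>
      (heatKer d s z * heatKer d t (y - z)) • u (x - y) := by
    intro z
    have base := (conv_integrand ht hm hb (x - z)).comp_sub_right z
    have base2 : Integrable fun y : Euc d => heatKer d t (y - z) • u (x - y) := by
      refine base.congr (Filter.Eventually.of_forall fun y => ?_)
      show heatKer d t (y - z) • u (x - z - (y - z)) = _
      rw [show x - z - (y - z) = x - y from by abel]
    exact (base2.smul (heatKer d s z)).congr
      (Filter.Eventually.of_forall fun y => by rw [Pi.smul_apply, smul_smul])
  have hswap : Integrable (Function.uncurry fun z y : Euc d =>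
      (heatKer d s z * heatKer d t (y - z)) • u (x - y)) (volume.prod volume) := by
    rw [show (Function.uncurry fun z y : Euc d =>
        (heatKer d s z * heatKer d t (y - z)) • u (x - y))
      = fun p : Euc d × Euc d => (heatKer d s p.1 * heatKer d t (p.2 - p.1)) • u (x - p.2)
      from rfl]
    have hjm : Measurable fun p : Euc d × Euc d =>
        (heatKer d s p.1 * heatKer d t (p.2 - p.1)) • u (x - p.2) :=
      (((heatKer_continuous d s).measurable.comp measurable_fst).mul
        ((heatKer_continuous d t).measurable.comp (measurable_snd.sub measurable_fst))).smul
        (hm.comp (measurable_const.sub measurable_snd))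
    rw [integrable_prod_iff hjm.stronglyMeasurable.aestronglyMeasurable]
    constructor
    · exact Filter.Eventually.of_forall fun z => hzint z
    · refine Integrable.mono' (integrable_heatKer hs)
        (StronglyMeasurable.integral_prod_right' hjm.norm.stronglyMeasurable).aestronglyMeasurable
        (Filter.Eventually.of_forall fun z => ?_)
      have hnn : 0 ≤ ∫ y : Euc d, ‖(heatKer d s z * heatKer d t (y - z)) • u (x - y)‖ :=
        integral_nonneg fun y => norm_nonneg _
      rw [Real.norm_eq_abs, abs_of_nonneg hnn]
      calc ∫ y : Euc d, ‖(heatKer d s z * heatKer d t (y - z)) • u (x - y)‖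
          ≤ ∫ y : Euc d, heatKer d s z * heatKer d t (y - z) := by
            refine integral_mono (hzint z).norm
              (((integrable_heatKer ht).comp_sub_right z).const_mul _) fun y => ?_
            rw [norm_smul, Real.norm_eq_abs, abs_mul,
              abs_of_nonneg (heatKer_nonneg hs z), abs_of_nonneg (heatKer_nonneg ht _)]
            calc heatKer d s z * heatKer d t (y - z) * ‖u (x - y)‖
                ≤ heatKer d s z * heatKer d t (y - z) * 1 :=
                  mul_le_mul_of_nonneg_left (hb _)
                    (mul_nonneg (heatKer_nonneg hs z) (heatKer_nonneg ht _))
              _ = heatKer d s z * heatKer d t (y - z) := mul_one _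
        _ = heatKer d s z * ∫ y : Euc d, heatKer d t (y - z) := integral_const_mul _ _
        _ = heatKer d s z := by rw [integral_heatKer_shift ht z, mul_one]
  calc heatConv s (heatConv t u) x
      = ∫ z : Euc d, heatKer d s z • heatConv t u (x - z) := rfl
    _ = ∫ z : Euc d, heatKer d s z • ∫ y : Euc d, heatKer d t (y - z) • u (x - y) :=
        integral_congr_ae (Filter.Eventually.of_forall fun z => by beta_reduce; rw [inner_eq z])
    _ = ∫ z : Euc d, ∫ y : Euc d, (heatKer d s z * heatKer d t (y - z)) • u (x - y) := by
        refine integral_congr_ae (Filter.Eventually.of_forall fun z => ?_)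
        beta_reduce
        rw [← integral_smul]
        exact integral_congr_ae (Filter.Eventually.of_forall fun y => by beta_reduce; rw [smul_smul])
    _ = ∫ y : Euc d, ∫ z : Euc d, (heatKer d s z * heatKer d t (y - z)) • u (x - y) :=
        integral_integral_swap hswap
    _ = ∫ y : Euc d, heatKer d (s + t) y • u (x - y) := by
        refine integral_congr_ae (Filter.Eventually.of_forall fun y => ?_)
        beta_reduce
        rw [integral_smul_const, heatKer_conv hs ht y]
    _ = heatConv (s + t) u x := rfl

end Semigroup

section Energy
variable {d : ℕ} {h : ℝ}

lemma integrableOn_cube {φ : Euc d → ℝ} (hm : AEStronglyMeasurable φ (volume.restrict (cube d)))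
    {C : ℝ} (hb : ∀ x, |φ x| ≤ C) : IntegrableOn φ (cube d) :=
  Integrable.mono' (integrable_const C) hm
    (Filter.Eventually.of_forall fun x => by rw [Real.norm_eq_abs]; exact hb x)

lemma integrableOn_inner {f g : Euc d → Euc 2} (Gf : Good f) (Gg : Good g) :
    IntegrableOn (fun x => ⟪f x, g x⟫) (cube d) := by
  refine integrableOn_cube ((Gf.1.inner Gg.1).aestronglyMeasurable) (C := 1) fun x => ?_
  calc |⟪f x, g x⟫| ≤ ‖f x‖ * ‖g x‖ := abs_real_inner_le_norm _ _
    _ ≤ 1 * 1 := mul_le_mul (Gf.2.2 _) (Gg.2.2 _) (norm_nonneg _) zero_le_one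
    _ = 1 := mul_one _

lemma inner_conv_half (hh : 0 < h) {f g : Euc d → Euc 2} (Gf : Good f) (Gg : Good g) :
    ∫ x in cube d, ⟪f x, heatConv h g x⟫
      = ∫ x in cube d, ⟪heatConv (h/2) f x, heatConv (h/2) g x⟫ := by
  have h2 : 0 < h/2 := by linarith
  have hsg : ∀ x : Euc d, heatConv h g x = heatConv (h/2) (heatConv (h/2) g) x := by
    intro x
    rw [heatConv_heatConv h2 h2 Gg.1 Gg.2.2 x, add_halves]
  calc ∫ x in cube d, ⟪f x, heatConv h g x⟫
      = ∫ x in cube d, ⟪f x, heatConv (h/2) (heatConv (h/2) g) x⟫ :=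
        integral_congr_ae (Filter.Eventually.of_forall fun x => by beta_reduce; rw [hsg x])
    _ = ∫ x in cube d, ⟪heatConv (h/2) f x, heatConv (h/2) g x⟫ :=
        heatConv_symm h2 Gf (Good.conv h2 Gg)

lemma Eh_eq (hh : 0 < h) {u : Euc 3 → Euc 2} (Gu : Good u) :
    Eh h u = (1/h) * (((volume : Measure (Euc 3)) (cube 3)).toReal
      - ∫ x in cube 3, ‖heatConv (h/2) u x‖^2) := by
  rw [Eh]
  congr 1
  rw [integral_sub (integrable_const 1) (integrableOn_inner Gu (Good.conv hh Gu))]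
  congr 1
  · rw [setIntegral_const, smul_eq_mul, mul_one, Measure.real]
  · rw [inner_conv_half hh Gu Gu]
    exact integral_congr_ae (Filter.Eventually.of_forall fun x =>
      real_inner_self_eq_norm_sq _)

lemma conv_inner_mono (hh : 0 < h) {u : Euc 3 → Euc 2} (Gu : Good u) :
    ∫ x in cube 3, ⟪u x, heatConv h u x⟫
      ≤ ∫ x in cube 3, ⟪threshStep h u x, heatConv h u x⟫ := by
  have Gv : Good (heatConv h u) := Good.conv hh Gu
  refine integral_mono (integrableOn_inner Gu Gv)
    (integrableOn_inner (Good.step hh Gu) Gv) fun x => ?_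
  show ⟪u x, heatConv h u x⟫ ≤ ⟪‖heatConv h u x‖⁻¹ • heatConv h u x, heatConv h u x⟫
  set v := heatConv h u x with hv
  rcases eq_or_ne v 0 with h0 | h0
  · simp [h0]
  · rw [real_inner_smul_left, real_inner_self_eq_norm_sq]
    have hvn : ‖v‖ ≠ 0 := norm_ne_zero_iff.mpr h0
    have : ‖v‖⁻¹ * ‖v‖^2 = ‖v‖ := by field_simp
    rw [this]
    calc ⟪u x, v⟫ ≤ ‖u x‖ * ‖v‖ := real_inner_le_norm _ _
      _ ≤ 1 * ‖v‖ := mul_le_mul_of_nonneg_right (Gu.2.2 _) (norm_nonneg _)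
      _ = ‖v‖ := one_mul _

lemma heatConv_smul_sub {h' : ℝ} (hh' : 0 < h') {a b : Euc 3 → Euc 2}
    (Ga : Good a) (Gb : Good b) (c : ℝ) (x : Euc 3) :
    heatConv h' (fun y => c • (a y - b y)) x
      = c • (heatConv h' a x - heatConv h' b x) := by
  unfold heatConv
  rw [← integral_sub (conv_integrand hh' Ga.1 Ga.2.2 x) (conv_integrand hh' Gb.1 Gb.2.2 x),
    ← integral_smul]
  refine integral_congr_ae (Filter.Eventually.of_forall fun z => ?_)
  beta_reduce
  rw [smul_comm, smul_sub]

end Energy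

section MainPart
variable {h : ℝ}

lemma step_ineq (hh : 0 < h) {b : Euc 3 → Euc 2} (Gb : Good b) :
    Eh h (threshStep h b) + h * ∫ x in cube 3,
        ‖heatConv (h/2) (fun y => h⁻¹ • (threshStep h b y - b y)) x‖^2 ≤ Eh h b := by
  have h2 : 0 < h/2 := by linarith
  have Ga : Good (threshStep h b) := Good.step hh Gb
  have GA : Good (heatConv (h/2) (threshStep h b)) := Good.conv h2 Ga
  have GB : Good (heatConv (h/2) b) := Good.conv h2 Gb
  have iIA : IntegrableOn
      (fun x => ⟪heatConv (h/2) (threshStep h b) x, heatConv (h/2) (threshStep h b) x⟫)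
      (cube 3) := integrableOn_inner GA GA
  have iIB : IntegrableOn (fun x => ⟪heatConv (h/2) b x, heatConv (h/2) b x⟫) (cube 3) :=
    integrableOn_inner GB GB
  have iIAB : IntegrableOn
      (fun x => ⟪heatConv (h/2) (threshStep h b) x, heatConv (h/2) b x⟫) (cube 3) :=
    integrableOn_inner GA GB
  have eA : (∫ x in cube 3, ⟪heatConv (h/2) (threshStep h b) x, heatConv (h/2) (threshStep h b) x⟫)
      = ∫ x in cube 3, ‖heatConv (h/2) (threshStep h b) x‖^2 :=
    integral_congr_ae (Filter.Eventually.of_forall fun x => real_inner_self_eq_norm_sq _)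
  have eB : (∫ x in cube 3, ⟪heatConv (h/2) b x, heatConv (h/2) b x⟫)
      = ∫ x in cube 3, ‖heatConv (h/2) b x‖^2 :=
    integral_congr_ae (Filter.Eventually.of_forall fun x => real_inner_self_eq_norm_sq _)
  have hD2 : h * ∫ x in cube 3,
        ‖heatConv (h/2) (fun y => h⁻¹ • (threshStep h b y - b y)) x‖^2
      = (1/h) * ∫ x in cube 3,
          ‖heatConv (h/2) (threshStep h b) x - heatConv (h/2) b x‖^2 := by
    have hD : ∫ x in cube 3, ‖heatConv (h/2) (fun y => h⁻¹ • (threshStep h b y - b y)) x‖^2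
        = h⁻¹^2 * ∫ x in cube 3,
            ‖heatConv (h/2) (threshStep h b) x - heatConv (h/2) b x‖^2 := by
      rw [← integral_const_mul]
      refine integral_congr_ae (Filter.Eventually.of_forall fun x => ?_)
      beta_reduce
      rw [heatConv_smul_sub h2 Ga Gb h⁻¹ x, norm_smul, mul_pow, Real.norm_eq_abs, sq_abs]
    rw [hD, ← mul_assoc]
    congr 1
    field_simp
  have hexp : ∫ x in cube 3, ‖heatConv (h/2) (threshStep h b) x - heatConv (h/2) b x‖^2
      = (∫ x in cube 3, ‖heatConv (h/2) (threshStep h b) x‖^2)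
        - 2 * (∫ x in cube 3, ⟪heatConv (h/2) (threshStep h b) x, heatConv (h/2) b x⟫)
        + ∫ x in cube 3, ‖heatConv (h/2) b x‖^2 := by
    calc ∫ x in cube 3, ‖heatConv (h/2) (threshStep h b) x - heatConv (h/2) b x‖^2
        = ∫ x in cube 3,
            (⟪heatConv (h/2) (threshStep h b) x, heatConv (h/2) (threshStep h b) x⟫
              - 2 * ⟪heatConv (h/2) (threshStep h b) x, heatConv (h/2) b x⟫
              + ⟪heatConv (h/2) b x, heatConv (h/2) b x⟫) := by
          refine integral_congr_ae (Filter.Eventually.of_forall fun x => ?_)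
          beta_reduce
          rw [norm_sub_sq_real, real_inner_self_eq_norm_sq, real_inner_self_eq_norm_sq]
      _ = (∫ x in cube 3,
            (⟪heatConv (h/2) (threshStep h b) x, heatConv (h/2) (threshStep h b) x⟫
              - 2 * ⟪heatConv (h/2) (threshStep h b) x, heatConv (h/2) b x⟫))
          + ∫ x in cube 3, ⟪heatConv (h/2) b x, heatConv (h/2) b x⟫ :=
          integral_add (iIA.sub (iIAB.const_mul 2)) iIB
      _ = ((∫ x in cube 3,
            ⟪heatConv (h/2) (threshStep h b) x, heatConv (h/2) (threshStep h b) x⟫)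
          - ∫ x in cube 3, 2 * ⟪heatConv (h/2) (threshStep h b) x, heatConv (h/2) b x⟫)
          + ∫ x in cube 3, ⟪heatConv (h/2) b x, heatConv (h/2) b x⟫ := by
          rw [integral_sub iIA (iIAB.const_mul 2)]
      _ = _ := by rw [integral_const_mul, eA, eB]
  have hmono : (∫ x in cube 3, ‖heatConv (h/2) b x‖^2)
      ≤ ∫ x in cube 3, ⟪heatConv (h/2) (threshStep h b) x, heatConv (h/2) b x⟫ := by
    rw [← inner_conv_half hh Ga Gb, ← eB, ← inner_conv_half hh Gb Gb]
    exact conv_inner_mono hh Gb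
  rw [Eh_eq hh Ga, Eh_eq hh Gb, hD2, hexp]
  have h0 : 0 ≤ (1/h) * ((∫ x in cube 3,
        ⟪heatConv (h/2) (threshStep h b) x, heatConv (h/2) b x⟫)
      - ∫ x in cube 3, ‖heatConv (h/2) b x‖^2) :=
    mul_nonneg (by positivity) (sub_nonneg.mpr hmono)
  nlinarith [h0]

end MainPart

end HK

open HK

/-- Energy-dissipation estimate for the thresholding scheme. -/
theorem thresholding_energy_dissipation
    (h : ℝ) (hh : 0 < h) (u0 : Euc 3 → Euc 2)
    (humeas : Measurable u0) (huper : ZPeriodic u0) (huunit : ∀ x, ‖u0 x‖ = 1)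
    (U : ℕ → Euc 3 → Euc 2) (hU0 : U 0 = u0)
    (hUs : ∀ n, U (n + 1) = threshStep h (U n)) (N : ℕ) :
    Eh h (U N) + h * ∑ n ∈ Finset.range N,
        ∫ x in cube 3, ‖heatConv (h / 2) (fun y => h⁻¹ • (U (n + 1) y - U n y)) x‖ ^ 2
      ≤ Eh h u0 := by
  have Gu : ∀ n, Good (U n) := by
    intro n
    induction n with
    | zero => rw [hU0]; exact ⟨humeas, huper, fun x => le_of_eq (huunit x)⟩
    | succ n ih => rw [hUs n]; exact Good.step hh ih
  induction N with
  | zero => simp [hU0]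
  | succ N ih =>
    rw [Finset.sum_range_succ]
    have hstep := step_ineq hh (Gu N)
    rw [← hUs N] at hstep
    have : Eh h (U (N + 1))
        + h * ((∑ n ∈ Finset.range N, ∫ x in cube 3,
            ‖heatConv (h / 2) (fun y => h⁻¹ • (U (n + 1) y - U n y)) x‖ ^ 2)
          + ∫ x in cube 3, ‖heatConv (h / 2) (fun y => h⁻¹ • (U (N + 1) y - U N y)) x‖ ^ 2)
        = (Eh h (U (N + 1))
            + h * ∫ x in cube 3, ‖heatConv (h / 2) (fun y => h⁻¹ • (U (N + 1) y - U N y)) x‖ ^ 2)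
          + h * ∑ n ∈ Finset.range N, ∫ x in cube 3,
              ‖heatConv (h / 2) (fun y => h⁻¹ • (U (n + 1) y - U n y)) x‖ ^ 2 := by ring
    rw [this]
    calc _ ≤ Eh h (U N) + h * ∑ n ∈ Finset.range N, ∫ x in cube 3,
              ‖heatConv (h / 2) (fun y => h⁻¹ • (U (n + 1) y - U n y)) x‖ ^ 2 := by
            exact add_le_add hstep le_rfl
      _ ≤ Eh h u0 := ih
end
end

section
/- Commutator expansion: there is a universal constant C < ∞ such that for every h > 0, every ψ ∈ C²(𝕋³; ℝ), every bounded measurable V : 𝕋³ → ℝ^m, and every x ∈ 𝕋³, |(1/h)([G_{h/2}∗, ψ] V)(x) − ∇ψ(x) · (∇G_{h/2}∗V)(x)| ≤ C ‖∇²ψ‖_∞ ∫_{ℝ³} (|z|²/h) G_{h/2}(z) |V(x − z)| dz, where [G_{h/2}∗, ψ] V := G_{h/2}∗(ψV) − ψ (G_{h/2}∗V) and ∇ψ·(∇G_{h/2}∗V) := ∑_i ∂_iψ (∂_iG_{h/2})∗V. -/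
open MeasureTheory Real Filter
open scoped RealInnerProductSpace Topology NNReal

noncomputable section

section CommutatorAux

theorem integrable_gauss3 {b : ℝ} (hb : 0 < b) :
    Integrable (fun v : Euc 3 => Real.exp (-b * ‖v‖^2)) := by
  have h1 := (GaussianFourier.integrable_cexp_neg_mul_sq_norm_add (V := Euc 3) (b := (b:ℂ))
    (by simpa using hb) 0 0).norm
  simp only [zero_mul, add_zero, Complex.norm_exp] at h1
  convert h1 using 2 with v
  rw [show (-(b:ℂ) * (‖v‖:ℂ)^2) = ((-b * ‖v‖^2 : ℝ) : ℂ) by push_cast; ring, Complex.ofReal_re]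

theorem integrable_sq_gauss3 {b : ℝ} (hb : 0 < b) :
    Integrable (fun v : Euc 3 => ‖v‖^2 * Real.exp (-b * ‖v‖^2)) := by
  apply Integrable.mono' ((integrable_gauss3 (half_pos hb)).const_mul (2/b))
  · exact ((continuous_norm.pow 2).mul
      (Real.continuous_exp.comp (continuous_const.mul (continuous_norm.pow 2)))).aestronglyMeasurable
  · filter_upwards with v
    have h0 : (0:ℝ) ≤ ‖v‖^2 := by positivity
    have h1 : ‖v‖^2 ≤ (2/b) * Real.exp ((b/2) * ‖v‖^2) := by
      rw [div_mul_eq_mul_div, le_div_iff₀ hb]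
      nlinarith [Real.add_one_le_exp ((b/2) * ‖v‖^2)]
    have h2 : ‖‖v‖^2 * Real.exp (-b * ‖v‖^2)‖ = ‖v‖^2 * Real.exp (-b * ‖v‖^2) := by
      rw [Real.norm_eq_abs, abs_of_nonneg]; positivity
    rw [h2]
    calc ‖v‖^2 * Real.exp (-b * ‖v‖^2)
        ≤ ((2/b) * Real.exp ((b/2) * ‖v‖^2)) * Real.exp (-b * ‖v‖^2) := by
          apply mul_le_mul_of_nonneg_right h1 (Real.exp_pos _).le
      _ = (2/b) * Real.exp (-(b/2) * ‖v‖^2) := by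
          rw [mul_assoc, ← Real.exp_add]; ring_nf

theorem periodic_norm_bound {E : Type*} [NormedAddCommGroup E] {f : Euc 3 → E}
    (hf : Continuous f) (hp : ZPeriodic f) : ∃ M, ∀ y, ‖f y‖ ≤ M := by
  set K₀ : Set (Euc 3) := {x | ∀ i, x i ∈ Set.Icc (0:ℝ) 1} with hK₀def
  have hclosed : IsClosed K₀ := by
    have : K₀ = ⋂ i : Fin 3, (fun x : Euc 3 => x i) ⁻¹' Set.Icc (0:ℝ) 1 := by
      ext x; simp [hK₀def]
    rw [this]
    exact isClosed_iInter fun i => isClosed_Icc.preimage ((continuous_apply i).comp (PiLp.continuous_ofLp 2 _))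
  have hbdd : Bornology.IsBounded K₀ := by
    apply Bornology.IsBounded.subset (Metric.isBounded_closedBall (x := (0 : Euc 3)) (r := 2))
    intro x hx
    simp only [Metric.mem_closedBall, dist_zero_right]
    have : ‖x‖ ≤ Real.sqrt 3 := by
      rw [EuclideanSpace.norm_eq]
      apply Real.sqrt_le_sqrt
      have : ∀ i : Fin 3, ‖x i‖^2 ≤ 1 := by
        intro i
        obtain ⟨h1, h2⟩ := hx i
        rw [Real.norm_eq_abs, sq_abs]
        nlinarith
      calc (∑ i : Fin 3, ‖x i‖^2) ≤ ∑ _i : Fin 3, (1:ℝ) :=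
            Finset.sum_le_sum fun i _ => this i
        _ = 3 := by simp
    refine this.trans ?_
    rw [show (2:ℝ) = Real.sqrt 4 by rw [show (4:ℝ) = 2^2 by norm_num, Real.sqrt_sq]; norm_num]
    exact Real.sqrt_le_sqrt (by norm_num)
  obtain ⟨C, hC⟩ := (Metric.isCompact_of_isClosed_isBounded hclosed
    hbdd).exists_bound_of_continuousOn hf.continuousOn
  refine ⟨C, fun y => ?_⟩
  set k : Fin 3 → ℤ := fun i => ⌊y i⌋ with hk
  have hmem : y - intVec k ∈ K₀ := by
    intro i
    have : (y - intVec k) i = Int.fract (y i) := by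
      simp [intVec, Int.fract, hk, sub_eq_add_neg]
    rw [this]
    exact ⟨Int.fract_nonneg _, (Int.fract_lt_one _).le⟩
  have : f y = f (y - intVec k) := by
    conv_lhs => rw [show y = (y - intVec k) + intVec k by abel]
    exact hp _ k
  rw [this]
  exact hC _ hmem

theorem heatKer_eq (h : ℝ) :
    heatKer 3 h = fun z => (4 * π * h) ^ (-(3:ℝ)/2) * Real.exp (-(4*h)⁻¹ * ‖z‖^2) := by
  funext z
  unfold heatKer
  norm_num
  left
  ring

theorem hasFDerivAt_heatKer (h : ℝ) (z : Euc 3) :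
    HasFDerivAt (heatKer 3 h) ((-(2*h)⁻¹ * heatKer 3 h z) • innerSL ℝ z) z := by
  have h1 : HasFDerivAt (fun z : Euc 3 => ‖z‖^2) ((2:ℝ) • innerSL ℝ z) z := by
    have := (hasStrictFDerivAt_norm_sq z).hasFDerivAt
    refine this.congr_fderiv ?_
    ext w; simp [two_smul]
  have h2 := ((h1.const_mul (-(4*h)⁻¹)).exp).const_mul ((4*π*h) ^ (-(3:ℝ)/2))
  rw [heatKer_eq h]
  refine h2.congr_fderiv ?_
  ext w
  simp only [ContinuousLinearMap.coe_smul', Pi.smul_apply, smul_eq_mul, heatKer_eq]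
  ring

theorem sum_single_eq (z : Euc 3) : (∑ j : Fin 3, z j • EuclideanSpace.single j (1:ℝ)) = z := by
  ext j
  rw [WithLp.ofLp_sum, Finset.sum_apply j Finset.univ _]
  simp [EuclideanSpace.single_apply]

theorem fderiv_comp_add' {E : Type*} [NormedAddCommGroup E] [NormedSpace ℝ E]
    (f : Euc 3 → E) (v x : Euc 3) (hf : DifferentiableAt ℝ f (x + v)) :
    fderiv ℝ (fun y => f (y + v)) x = fderiv ℝ f (x + v) := by
  have h1 : HasFDerivAt (fun y : Euc 3 => y + v) (ContinuousLinearMap.id ℝ (Euc 3)) x := by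
    simpa using (hasFDerivAt_id x).add_const v
  have h2 := (hf.hasFDerivAt.comp x h1)
  exact h2.fderiv

theorem zperiodic_fderiv {E : Type*} [NormedAddCommGroup E] [NormedSpace ℝ E]
    {f : Euc 3 → E} (hd : Differentiable ℝ f) (hp : ZPeriodic f) :
    ZPeriodic (fderiv ℝ f) := by
  intro x k
  rw [← fderiv_comp_add' f (intVec k) x (hd _)]
  congr 1
  funext y
  exact hp y k

theorem taylor_bound {ψ : Euc 3 → ℝ} (hψ : Differentiable ℝ ψ) {K : ℝ} (hK : 0 ≤ K)
    (hLip : ∀ y z : Euc 3, ‖fderiv ℝ ψ y - fderiv ℝ ψ z‖ ≤ K * ‖y - z‖)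
    (x z : Euc 3) : ‖ψ (x - z) - ψ x + fderiv ℝ ψ x z‖ ≤ K * ‖z‖^2 := by
  set g : Euc 3 → ℝ := fun w => ψ w - fderiv ℝ ψ x w with hg
  have hgd : ∀ w, HasFDerivAt g (fderiv ℝ ψ w - fderiv ℝ ψ x) w := fun w =>
    (hψ w).hasFDerivAt.sub (fderiv ℝ ψ x).hasFDerivAt
  have hseg : ∀ w ∈ segment ℝ x (x - z), ‖fderiv ℝ ψ w - fderiv ℝ ψ x‖ ≤ K * ‖z‖ := by
    rintro w ⟨a, b, ha, hb, hab, rfl⟩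
    calc ‖fderiv ℝ ψ (a • x + b • (x - z)) - fderiv ℝ ψ x‖
        ≤ K * ‖(a • x + b • (x - z)) - x‖ := hLip _ _
      _ = K * (b * ‖z‖) := by
          rw [show (a • x + b • (x - z)) - x = (a + b - 1) • x - b • z by module, hab]
          simp [norm_smul, abs_of_nonneg hb]
      _ ≤ K * ‖z‖ := by
          have hb1 : b ≤ 1 := by linarith
          have : b * ‖z‖ ≤ ‖z‖ := by nlinarith [norm_nonneg z]
          exact mul_le_mul_of_nonneg_left this hK
  have key := (convex_segment x (x - z)).norm_image_sub_le_of_norm_hasFDerivWithin_le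
    (fun w _ => (hgd w).hasFDerivWithinAt) hseg (left_mem_segment ℝ x (x - z))
    (right_mem_segment ℝ x (x - z))
  have h1 : g (x - z) - g x = ψ (x - z) - ψ x + fderiv ℝ ψ x z := by
    simp only [hg]
    rw [map_sub]
    ring
  have h2 : ‖(x - z) - x‖ = ‖z‖ := by rw [show (x - z) - x = -z by abel, norm_neg]
  rw [h1, h2] at key
  calc ‖ψ (x - z) - ψ x + fderiv ℝ ψ x z‖ ≤ K * ‖z‖ * ‖z‖ := key
    _ = K * ‖z‖^2 := by ring

end CommutatorAux

set_option maxHeartbeats 2000000 in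
/-- Commutator expansion: (1/h)[G_{h/2}∗, ψ]V equals ∇ψ·(∇G_{h/2}∗V) up to an
error controlled by ‖∇²ψ‖_∞ ∫ (|z|²/h) G_{h/2}(z) |V(x−z)| dz. -/
theorem commutator_expansion :
    ∃ C : ℝ, 0 < C ∧
      ∀ (m : ℕ) (h : ℝ), 0 < h →
      ∀ (ψ : Euc 3 → ℝ), ContDiff ℝ 2 ψ → ZPeriodic ψ →
      ∀ (V : Euc 3 → Euc m), Measurable V → ZPeriodic V → (∃ M, ∀ x, ‖V x‖ ≤ M) →
      ∀ x : Euc 3,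
        ‖(1 / h) • (heatConv (h / 2) (fun y => ψ y • V y) x - ψ x • heatConv (h / 2) V x)
            - ∑ i : Fin 3, fderiv ℝ ψ x (EuclideanSpace.single i 1) • heatConvD (h / 2) i V x‖
          ≤ C * (⨆ y : Euc 3, ‖fderiv ℝ (fderiv ℝ ψ) y‖) *
              ∫ z : Euc 3, (‖z‖ ^ 2 / h) * heatKer 3 (h / 2) z * ‖V (x - z)‖ := by
  refine ⟨1, one_pos, ?_⟩
  intro m h hh ψ hψ hψper V hVm hVper hVbdd x
  obtain ⟨M₀, hM₀⟩ := hVbdd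
  set M : ℝ := max M₀ 0 with hMdef
  have hM : ∀ y, ‖V y‖ ≤ M := fun y => (hM₀ y).trans (le_max_left _ _)
  have hM0 : (0:ℝ) ≤ M := le_max_right _ _
  set G : Euc 3 → ℝ := heatKer 3 (h/2) with hGdef
  set c : ℝ := (4*π*(h/2)) ^ (-(3:ℝ)/2) with hcdef
  set b : ℝ := (4*(h/2))⁻¹ with hbdef
  have hb : 0 < b := by rw [hbdef]; positivity
  have hG_eq : G = fun z => c * Real.exp (-b * ‖z‖^2) := heatKer_eq (h/2)
  have hGc : Continuous G := by
    rw [hG_eq]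
    exact continuous_const.mul (Real.continuous_exp.comp (continuous_const.mul
      (continuous_norm.pow 2)))
  have hc : 0 < c := by
    rw [hcdef]; exact Real.rpow_pos_of_pos (by positivity) _
  have hGnn : ∀ z, 0 ≤ G z := fun z => by rw [hG_eq]; positivity
  have hG_int : Integrable G := by rw [hG_eq]; exact (integrable_gauss3 hb).const_mul c
  have hG2_int : Integrable (fun z : Euc 3 => ‖z‖^2 * G z) := by
    have h1 := (integrable_sq_gauss3 hb).const_mul c
    apply h1.congr
    filter_upwards with z
    rw [hG_eq]; ring
  have hVz : AEStronglyMeasurable (fun z : Euc 3 => V (x - z)) volume :=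
    (hVm.comp (measurable_const.sub measurable_id)).aestronglyMeasurable
  have hDeriv : ∀ (z : Euc 3) (i : Fin 3),
      fderiv ℝ G z (EuclideanSpace.single i 1) = (-(z i) / h) * G z := by
    intro z i
    rw [hGdef, (hasFDerivAt_heatKer (h/2) z).fderiv]
    simp only [ContinuousLinearMap.coe_smul', Pi.smul_apply, smul_eq_mul]
    have hin : (innerSL ℝ z) (EuclideanSpace.single i (1:ℝ)) = z i := by
      simp [EuclideanSpace.inner_single_right]
    rw [hin]
    have hh2 : (2*(h/2)) = h := by ring
    rw [hh2]
    ring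
  -- Hessian bound
  have hψd : Differentiable ℝ ψ := hψ.differentiable (by norm_num)
  have hψ1 : ContDiff ℝ 1 (fderiv ℝ ψ) := hψ.fderiv_right (by norm_num)
  have hfd1 : Differentiable ℝ (fderiv ℝ ψ) := hψ1.differentiable (by norm_num)
  have hHc : Continuous (fderiv ℝ (fderiv ℝ ψ)) := hψ1.continuous_fderiv (by norm_num)
  have hfper : ZPeriodic (fderiv ℝ ψ) := zperiodic_fderiv hψd hψper
  have hHper : ZPeriodic (fderiv ℝ (fderiv ℝ ψ)) := zperiodic_fderiv hfd1 hfper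
  obtain ⟨K₁, hK₁⟩ := periodic_norm_bound hHc hHper
  set K : ℝ := ⨆ y : Euc 3, ‖fderiv ℝ (fderiv ℝ ψ) y‖ with hKdef
  have hbddA : BddAbove (Set.range fun y : Euc 3 => ‖fderiv ℝ (fderiv ℝ ψ) y‖) := by
    refine ⟨K₁, ?_⟩; rintro _ ⟨y, rfl⟩; exact hK₁ y
  have hK : ∀ y, ‖fderiv ℝ (fderiv ℝ ψ) y‖ ≤ K := fun y => le_ciSup hbddA y
  have hK0 : 0 ≤ K := (norm_nonneg (fderiv ℝ (fderiv ℝ ψ) x)).trans (hK x)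
  have hLip : ∀ y z : Euc 3, ‖fderiv ℝ ψ y - fderiv ℝ ψ z‖ ≤ K * ‖y - z‖ := fun y z =>
    Convex.norm_image_sub_le_of_norm_fderiv_le (fun a _ => hfd1 a) (fun a _ => hK a)
      convex_univ (Set.mem_univ z) (Set.mem_univ y)
  have hTay := taylor_bound hψd hK0 hLip x
  obtain ⟨Mψ, hMψ⟩ := periodic_norm_bound hψ.continuous hψper
  have hMψ0 : 0 ≤ Mψ := (norm_nonneg _).trans (hMψ x)
  -- integrability pieces
  have hI1 : Integrable (fun z : Euc 3 => G z • V (x - z)) := by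
    apply Integrable.mono' (hG_int.const_mul M) (hGc.aestronglyMeasurable.smul hVz)
    filter_upwards with z
    show ‖G z • V (x - z)‖ ≤ M * G z
    rw [norm_smul, Real.norm_eq_abs, abs_of_nonneg (hGnn z)]
    calc G z * ‖V (x - z)‖ ≤ G z * M := mul_le_mul_of_nonneg_left (hM _) (hGnn z)
      _ = M * G z := mul_comm _ _
  have hI2 : Integrable (fun z : Euc 3 => G z • (ψ (x - z) • V (x - z))) := by
    apply Integrable.mono' (hG_int.const_mul (Mψ * M))
      (hGc.aestronglyMeasurable.smul
        (((hψ.continuous.comp (continuous_const.sub continuous_id)).aestronglyMeasurable).smul hVz))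
    filter_upwards with z
    show ‖G z • (ψ (x - z) • V (x - z))‖ ≤ Mψ * M * G z
    rw [norm_smul, norm_smul, Real.norm_eq_abs (G z), abs_of_nonneg (hGnn z)]
    have h1 : ‖ψ (x - z)‖ * ‖V (x - z)‖ ≤ Mψ * M :=
      mul_le_mul (hMψ _) (hM _) (norm_nonneg _) hMψ0
    calc G z * (‖ψ (x - z)‖ * ‖V (x - z)‖) ≤ G z * (Mψ * M) :=
          mul_le_mul_of_nonneg_left h1 (hGnn z)
      _ = Mψ * M * G z := mul_comm _ _
  have habs : ∀ (z : Euc 3) (i : Fin 3), |z i| ≤ ‖z‖ := by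
    intro z i
    have h1 := abs_real_inner_le_norm z (EuclideanSpace.single i (1:ℝ))
    have hin : ⟪z, EuclideanSpace.single i (1:ℝ)⟫ = z i := by
      simp [EuclideanSpace.inner_single_right]
    rw [hin] at h1
    simpa using h1
  have hnorm_le : ∀ z : Euc 3, ‖z‖ ≤ 1 + ‖z‖^2 := by
    intro z; nlinarith [sq_nonneg (‖z‖ - 1), norm_nonneg z]
  have hG12 : Integrable (fun z : Euc 3 => (M/h) * ((1 + ‖z‖^2) * G z)) := by
    have h1 : Integrable (fun z : Euc 3 => (1 + ‖z‖^2) * G z) := by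
      have := hG_int.add hG2_int
      apply this.congr
      filter_upwards with z
      simp only [Pi.add_apply]
      ring
    exact h1.const_mul _
  have hI3R : ∀ i : Fin 3, Integrable (fun z : Euc 3 => ((-(z i) / h) * G z) • V (x - z)) := by
    intro i
    apply Integrable.mono' hG12
    · exact (((((continuous_apply i).comp (PiLp.continuous_ofLp 2 _)).neg.div_const h).mul hGc).aestronglyMeasurable.smul hVz)
    filter_upwards with z
    rw [norm_smul, Real.norm_eq_abs, abs_mul, abs_div, abs_neg, abs_of_pos hh,
      abs_of_nonneg (hGnn z)]
    have h1 : |z i| ≤ 1 + ‖z‖^2 := (habs z i).trans (hnorm_le z)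
    have h2 : |z i| / h * G z * ‖V (x - z)‖ ≤ (1 + ‖z‖^2) / h * G z * M := by
      apply mul_le_mul _ (hM _) (norm_nonneg _) (mul_nonneg (by positivity) (hGnn z))
      have h3 : |z i| / h ≤ (1 + ‖z‖^2) / h := by gcongr
      exact mul_le_mul_of_nonneg_right h3 (hGnn z)
    calc |z i| / h * G z * ‖V (x - z)‖ ≤ (1 + ‖z‖^2) / h * G z * M := h2
      _ = M / h * ((1 + ‖z‖^2) * G z) := by ring
  have hI3 : ∀ i : Fin 3, Integrable (fun z : Euc 3 =>
      (fderiv ℝ ψ x (EuclideanSpace.single i 1) * ((-(z i) / h) * G z)) • V (x - z)) := by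
    intro i
    have h1 := (hI3R i).smul (fderiv ℝ ψ x (EuclideanSpace.single i 1))
    apply h1.congr
    filter_upwards with z
    simp only [Pi.smul_apply, smul_smul]
  have hrepr : ∀ z : Euc 3, fderiv ℝ ψ x z
      = ∑ i : Fin 3, z i * fderiv ℝ ψ x (EuclideanSpace.single i 1) := by
    intro z
    conv_lhs => rw [← sum_single_eq z]
    rw [map_sum]
    exact Finset.sum_congr rfl fun i _ => by rw [_root_.map_smul, smul_eq_mul]
  have hpoint : ∀ z : Euc 3,
      (∑ i : Fin 3, (fderiv ℝ ψ x (EuclideanSpace.single i 1) * ((-(z i) / h) * G z)) • V (x - z))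
      = (-(1/h) * (fderiv ℝ ψ x z * G z)) • V (x - z) := by
    intro z
    rw [← Finset.sum_smul]
    congr 1
    rw [hrepr z, Finset.sum_mul, Finset.mul_sum]
    exact Finset.sum_congr rfl fun i _ => by ring
  have hI1s : Integrable (fun z : Euc 3 => ψ x • (G z • V (x - z))) := hI1.smul (ψ x)
  -- part A
  have hA : (1 / h) • (heatConv (h / 2) (fun y => ψ y • V y) x - ψ x • heatConv (h / 2) V x)
      = ∫ z : Euc 3, ((1/h) * ((ψ (x - z) - ψ x) * G z)) • V (x - z) := by
    simp only [heatConv, ← hGdef]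
    rw [← integral_smul, ← integral_sub hI2 hI1s, ← integral_smul]
    congr 1
    funext z
    module
  -- part B
  have hB : (∑ i : Fin 3, fderiv ℝ ψ x (EuclideanSpace.single i 1) • heatConvD (h / 2) i V x)
      = ∫ z : Euc 3, (-(1/h) * (fderiv ℝ ψ x z * G z)) • V (x - z) := by
    simp only [heatConvD, ← hGdef]
    have hstep : ∀ i : Fin 3, fderiv ℝ ψ x (EuclideanSpace.single i 1) •
        ∫ z : Euc 3, (fderiv ℝ G z (EuclideanSpace.single i 1)) • V (x - z)
        = ∫ z : Euc 3,
            (fderiv ℝ ψ x (EuclideanSpace.single i 1) * ((-(z i) / h) * G z)) • V (x - z) := by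
      intro i
      rw [← integral_smul]
      congr 1
      funext z
      rw [hDeriv z i, smul_smul]
    rw [Finset.sum_congr rfl fun i _ => hstep i,
      ← integral_finset_sum _ (fun i _ => hI3 i)]
    congr 1
    funext z
    exact hpoint z
  have hIf1 : Integrable (fun z : Euc 3 => ((1/h) * ((ψ (x - z) - ψ x) * G z)) • V (x - z)) := by
    have h1 := (hI2.sub hI1s).smul ((1:ℝ)/h)
    apply h1.congr
    filter_upwards with z
    simp only [Pi.smul_apply, Pi.sub_apply, smul_sub, smul_smul, ← sub_smul]
    congr 1
    ring
  have hIf2 : Integrable (fun z : Euc 3 => (-(1/h) * (fderiv ℝ ψ x z * G z)) • V (x - z)) := by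
    have h1 := integrable_finset_sum (μ := volume) Finset.univ (fun i (_ : i ∈ Finset.univ) => hI3 i)
    apply h1.congr
    filter_upwards with z
    exact hpoint z
  have key : (1 / h) • (heatConv (h / 2) (fun y => ψ y • V y) x - ψ x • heatConv (h / 2) V x)
      - ∑ i : Fin 3, fderiv ℝ ψ x (EuclideanSpace.single i 1) • heatConvD (h / 2) i V x
      = ∫ z : Euc 3, ((1/h) * (ψ (x - z) - ψ x + fderiv ℝ ψ x z) * G z) • V (x - z) := by
    rw [hA, hB, ← integral_sub hIf1 hIf2]
    congr 1
    funext z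
    rw [← sub_smul]
    congr 1
    ring
  rw [key]
  have hI4 : Integrable (fun z : Euc 3 => K * (‖z‖^2 / h * G z * ‖V (x - z)‖)) := by
    have h1 : Integrable (fun z : Euc 3 => K * M / h * (‖z‖^2 * G z)) := hG2_int.const_mul _
    apply Integrable.mono' h1
    · exact ((((continuous_norm.pow 2).div_const h).mul hGc).aestronglyMeasurable.mul
        hVz.norm).const_mul K
    · filter_upwards with z
      have hnn : (0:ℝ) ≤ K * (‖z‖^2 / h * G z * ‖V (x - z)‖) := by
        have := hGnn z
        positivity
      rw [Real.norm_eq_abs, abs_of_nonneg hnn]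
      calc K * (‖z‖^2 / h * G z * ‖V (x - z)‖) ≤ K * (‖z‖^2 / h * G z * M) := by
            apply mul_le_mul_of_nonneg_left _ hK0
            apply mul_le_mul_of_nonneg_left (hM _)
            have := hGnn z
            positivity
        _ = K * M / h * (‖z‖^2 * G z) := by ring
  calc ‖∫ z : Euc 3, ((1/h) * (ψ (x - z) - ψ x + fderiv ℝ ψ x z) * G z) • V (x - z)‖
      ≤ ∫ z : Euc 3, K * (‖z‖^2 / h * G z * ‖V (x - z)‖) := by
        apply norm_integral_le_of_norm_le hI4
        filter_upwards with z
        rw [norm_smul, Real.norm_eq_abs, abs_mul, abs_mul,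
          abs_of_pos (by positivity : (0:ℝ) < 1/h), abs_of_nonneg (hGnn z)]
        have h1 : |ψ (x - z) - ψ x + fderiv ℝ ψ x z| ≤ K * ‖z‖^2 := by
          have := hTay z
          rwa [Real.norm_eq_abs] at this
        calc 1/h * |ψ (x - z) - ψ x + fderiv ℝ ψ x z| * G z * ‖V (x - z)‖
            ≤ 1/h * (K * ‖z‖^2) * G z * ‖V (x - z)‖ := by
              apply mul_le_mul_of_nonneg_right _ (norm_nonneg _)
              apply mul_le_mul_of_nonneg_right _ (hGnn z)
              exact mul_le_mul_of_nonneg_left h1 (by positivity)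
          _ = K * (‖z‖^2 / h * G z * ‖V (x - z)‖) := by ring
    _ = K * ∫ z : Euc 3, ‖z‖^2 / h * G z * ‖V (x - z)‖ := integral_const_mul _ _
    _ = 1 * K * ∫ z : Euc 3, ‖z‖^2 / h * G z * ‖V (x - z)‖ := by rw [one_mul]
end
end
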